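/- arXiv:2010.05976 — 2 statements merged into one kernel-verified Lean document; each statement's English description precedes it below -/
import Mathlib

section
/- Let S be a vector subspace of L²(0,2π) containing the functions z ↦ sin z and z ↦ sin(2z), and suppose that for all integers n > p ≥ 1 with n − p even, the function z ↦ n sin(nz) − p sin(pz) belongs to S. Then z ↦ sin(pz) belongs to S for every integer p ≥ 1. -/
open MeasureTheory Real

/-- Induction lemma for the vertical temperature modes: a subspace `S` of `L²(0,2π)`
containing `sin z`, `sin 2z` and all the differences `n sin(nz) − p sin(pz)` (for `n > p ≥ 1`
with `n − p` even) contains every `sin(pz)`, `p ≥ 1`. -/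
theorem stmt7
    (S : Submodule ℝ (Lp ℝ 2 (volume.restrict (Set.Ioc (0:ℝ) (2*π)))))
    (e : ℕ → Lp ℝ 2 (volume.restrict (Set.Ioc (0:ℝ) (2*π))))
    (he : ∀ k : ℕ, (e k : ℝ → ℝ) =ᵐ[volume.restrict (Set.Ioc (0:ℝ) (2*π))]
      fun z => Real.sin (k * z))
    (h1 : e 1 ∈ S) (h2 : e 2 ∈ S)
    (hdiff : ∀ n p : ℕ, 1 ≤ p → p < n → Even (n - p) →
      (n : ℝ) • e n - (p : ℝ) • e p ∈ S) :
    ∀ p : ℕ, 1 ≤ p → e p ∈ S := by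
  intro p
  induction p using Nat.strong_induction_on with
  | _ p ih =>
    intro hp
    match p, hp with
    | 1, _ => exact h1
    | 2, _ => exact h2
    | (q+3), _ =>
      have hq : e (q+1) ∈ S := ih (q+1) (by omega) (by omega)
      have hd : ((q+3 : ℕ) : ℝ) • e (q+3) - ((q+1 : ℕ) : ℝ) • e (q+1) ∈ S :=
        hdiff (q+3) (q+1) (by omega) (by omega) (by have h : q+3-(q+1) = 2 := (by omega); rw [h]; exact even_two)
      have hs : ((q+3 : ℕ) : ℝ) • e (q+3) ∈ S := by
        have := S.add_mem hd (S.smul_mem ((q+1 : ℕ) : ℝ) hq)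
        simpa using this
      have h0 : ((q+3 : ℕ) : ℝ) ≠ 0 := by positivity
      have := S.smul_mem (((q+3 : ℕ) : ℝ)⁻¹) hs
      rwa [smul_smul, inv_mul_cancel₀ h0, one_smul] at this
end

section
/- Let H₁ and H₂ be vector spaces, Q₁: H₂ → H₁ and L₂: H₂ → H₂ linear maps, and B₂: H₁ × H₂ → H₂ a bilinear map. For ζ ∈ H₂ define F_ζ: H₁ × H₂ → H₁ × H₂ by F_ζ(v, θ) = (v − Q₁ζ, θ − L₂ζ − B₂(v − (1/2)Q₁ζ, ζ)). Then for all ζ₁, ζ₂ ∈ H₂ and all (v, θ): F_{−ζ₂}(F_{−ζ₁}(F_{ζ₂}(F_{ζ₁}(v, θ)))) = (v, θ + B₂(Q₁ζ₁, ζ₂) − B₂(Q₁ζ₂, ζ₁)). -/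
/-- The elementary motion `F_ζ(v,θ) = (v − Q₁ζ, θ − L₂ζ − B₂(v − ½Q₁ζ, ζ))`. -/
noncomputable def Fmap {H₁ H₂ : Type*} [AddCommGroup H₁] [Module ℝ H₁]
    [AddCommGroup H₂] [Module ℝ H₂]
    (Q₁ : H₂ →ₗ[ℝ] H₁) (L₂ : H₂ →ₗ[ℝ] H₂) (B₂ : H₁ →ₗ[ℝ] H₂ →ₗ[ℝ] H₂)
    (ζ : H₂) (vθ : H₁ × H₂) : H₁ × H₂ :=
  (vθ.1 - Q₁ ζ, vθ.2 - L₂ ζ - B₂ (vθ.1 - (1/2 : ℝ) • Q₁ ζ) ζ)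

/-- The commutator identity producing the bracket direction
`𝔟₂(ζ₁,ζ₂) = B₂(Q₁ζ₁,ζ₂) − B₂(Q₁ζ₂,ζ₁)`. -/
theorem stmt18 {H₁ H₂ : Type*} [AddCommGroup H₁] [Module ℝ H₁]
    [AddCommGroup H₂] [Module ℝ H₂]
    (Q₁ : H₂ →ₗ[ℝ] H₁) (L₂ : H₂ →ₗ[ℝ] H₂) (B₂ : H₁ →ₗ[ℝ] H₂ →ₗ[ℝ] H₂)
    (ζ₁ ζ₂ : H₂) (v : H₁) (θ : H₂) :
    Fmap Q₁ L₂ B₂ (-ζ₂) (Fmap Q₁ L₂ B₂ (-ζ₁) (Fmap Q₁ L₂ B₂ ζ₂ (Fmap Q₁ L₂ B₂ ζ₁ (v, θ))))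
      = (v, θ + B₂ (Q₁ ζ₁) ζ₂ - B₂ (Q₁ ζ₂) ζ₁) := by
  simp only [Fmap, map_neg, map_sub, map_add, map_smul, LinearMap.sub_apply,
    LinearMap.neg_apply, LinearMap.smul_apply]
  refine Prod.ext ?_ ?_ <;> simp only [smul_neg] <;> module
end
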